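/- arXiv:math/0212348 — 4 statements merged into one kernel-verified Lean document; each statement's English description precedes it below -/
import Mathlib

section
/- For nonnegative integers a_{i-2},...,a_{i+5} satisfying the (k,3)-admissibility condition a_j+a_{j+1}+a_{j+2} ≤ k, the maximal-weight-l conditions a_j+a_{j+1} ≤ l and a_{j-1}+2a_j+2a_{j+1}+a_{j+2} ≤ k+l, and the equality a_{i+1}+2a_{i+2}+2a_{i+3}+a_{i+4} = k+l: if a_i+a_{i+1}=l then a_{i+3}+a_{i+4}=l. -/
-- The window at `i + 1` and the tight window at `i + 2` share `a (i+1) + 2 a (i+2) + a (i+3)`.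
lemma add_le_add_of_weighted_window_eq (m : ℕ) (a : ℤ → ℕ)
    (hL : ∀ j : ℤ, a (j-1) + 2 * a j + 2 * a (j+1) + a (j+2) ≤ m) (i : ℤ)
    (heq : a (i+1) + 2 * a (i+2) + 2 * a (i+3) + a (i+4) = m) :
    a i + a (i+1) ≤ a (i+3) + a (i+4) := by
  have hwindow : a i + 2 * a (i+1) + 2 * a (i+2) + a (i+3) ≤ m := by
    have h := hL (i+1)
    rwa [add_sub_cancel_right, add_assoc i 1 1, add_assoc i 1 2] at h
  omega

theorem stmt_0_general (k l : ℕ) (a : ℤ → ℕ)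
    (hS : ∀ j : ℤ, a j + a (j+1) ≤ l)
    (hL : ∀ j : ℤ, a (j-1) + 2 * a j + 2 * a (j+1) + a (j+2) ≤ k + l)
    (i : ℤ)
    (heq : a (i+1) + 2 * a (i+2) + 2 * a (i+3) + a (i+4) = k + l)
    (hSi : a i + a (i+1) = l) :
    a (i+3) + a (i+4) = l := by
  have hpair := hS (i+3)
  rw [add_assoc i 3 1] at hpair
  exact le_antisymm hpair (hSi ▸ add_le_add_of_weighted_window_eq (k + l) a hL i heq)

/-- Lemma BASIC: for a (k,3)-admissible configuration of maximal weight ≤ l,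
if a_{i+1}+2a_{i+2}+2a_{i+3}+a_{i+4} = k+l and a_i+a_{i+1} = l then a_{i+3}+a_{i+4} = l. -/
theorem stmt_0 (k l : ℕ) (hl : 1 ≤ l) (hlk : l ≤ k) (a : ℤ → ℕ)
    (hadm : ∀ j : ℤ, a j + a (j+1) + a (j+2) ≤ k)
    (hS : ∀ j : ℤ, a j + a (j+1) ≤ l)
    (hL : ∀ j : ℤ, a (j-1) + 2 * a j + 2 * a (j+1) + a (j+2) ≤ k + l)
    (i : ℤ)
    (heq : a (i+1) + 2 * a (i+2) + 2 * a (i+3) + a (i+4) = k + l)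
    (hSi : a i + a (i+1) = l) :
    a (i+3) + a (i+4) = l :=
  stmt_0_general k l a hS hL i heq hSi
end

section
/- Let (a_i) be a (k,3)-admissible configuration of maximal weight ≤ l, and suppose i is an index such that a_i + a_{i+1} = l or a_{i-1}+2a_i+2a_{i+1}+a_{i+2} = k+l, and for all j > i neither a_j+a_{j+1} = l nor a_{j-1}+2a_j+2a_{j+1}+a_{j+2} = k+l holds. Then a_i > 0, and the configuration b obtained by setting b_i = a_i - 1, b_{i+1} = a_{i+1}+1 and b_j = a_j otherwise is again (k,3)-admissible of maximal weight ≤ l. -/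
/-!
Write `T j = a j + a (j+1) + a (j+2)`, `P j = a j + a (j+1)` and
`W j = a (j-1) + 2 a j + 2 a (j+1) + a (j+2)`, so that `W j = T (j-1) + T j`.
If `i` carries a weight-`l` particle then `T i ≥ l`: either `P i = l ≤ T i`, or
`k + l = W i = T (i-1) + T i ≤ k + T i`.
Moving one unit from `i` to `i+1` raises only `T (i+1)`, `P (i+1)`, `W (i+1)` and `W (i+2)`,
each by one. Maximality of `i` gives `P (i+1) < l`, `W (i+1) < k + l` and `W (i+2) < k + l`,
and then `T (i+1) = W (i+1) - T i < (k + l) - l = k`.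
Finally `l ≤ T i = a i + P (i+1)` together with `P (i+1) < l` forces `a i > 0`.
-/

namespace Admissible

def pairSum (a : ℤ → ℕ) (j : ℤ) : ℕ := a j + a (j + 1)

def tripleSum (a : ℤ → ℕ) (j : ℤ) : ℕ := a j + a (j + 1) + a (j + 2)

def wideSum (a : ℤ → ℕ) (j : ℤ) : ℕ := a (j - 1) + 2 * a j + 2 * a (j + 1) + a (j + 2)

/-- Position `j` carries a weight-`l` particle. -/
def IsTight (k l : ℕ) (a : ℤ → ℕ) (j : ℤ) : Prop := pairSum a j = l ∨ wideSum a j = k + l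

/-- The right move `M_+` at position `i`. -/
def moveRight (a : ℤ → ℕ) (i : ℤ) : ℤ → ℕ :=
  Function.update (Function.update a i (a i - 1)) (i + 1) (a (i + 1) + 1)

variable {k l : ℕ} {a : ℤ → ℕ} {i j : ℤ}

lemma wideSum_eq_tripleSum_add (a : ℤ → ℕ) (j : ℤ) :
    wideSum a j = tripleSum a (j - 1) + tripleSum a j := by
  rw [wideSum, tripleSum, tripleSum, sub_add_cancel, show j - 1 + 2 = j + 1 by ring]
  ring

lemma tripleSum_eq_add_pairSum_succ (a : ℤ → ℕ) (j : ℤ) :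
    tripleSum a j = a j + pairSum a (j + 1) := by
  rw [tripleSum, pairSum, show j + 1 + 1 = j + 2 by ring, add_assoc]

lemma le_tripleSum_of_isTight (hT : ∀ j, tripleSum a j ≤ k) (h : IsTight k l a j) :
    l ≤ tripleSum a j := by
  rcases h with h | h
  · exact h ▸ Nat.le_add_right _ _
  · have := hT (j - 1)
    rw [wideSum_eq_tripleSum_add] at h
    omega

lemma pos_of_isTight (hT : ∀ j, tripleSum a j ≤ k) (hi : IsTight k l a i)
    (hP : pairSum a (i + 1) < l) : 0 < a i := by
  have := le_tripleSum_of_isTight hT hi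
  rw [tripleSum_eq_add_pairSum_succ] at this
  omega

lemma tripleSum_succ_lt (hT : ∀ j, tripleSum a j ≤ k) (hi : IsTight k l a i)
    (hW : wideSum a (i + 1) < k + l) : tripleSum a (i + 1) < k := by
  have := le_tripleSum_of_isTight hT hi
  rw [wideSum_eq_tripleSum_add, add_sub_cancel_right] at hW
  omega

section moveRight

variable (ha : 0 < a i)
include ha

lemma moveRight_apply (m : ℤ) :
    (moveRight a i m : ℤ) = a m - (if m = i then 1 else 0) + (if m = i + 1 then 1 else 0) := by
  rw [moveRight, Function.update_apply, Function.update_apply]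
  split_ifs <;> subst_vars <;> omega

lemma pairSum_moveRight_le (hj : j ≠ i + 1) : pairSum (moveRight a i) j ≤ pairSum a j := by
  zify
  simp only [pairSum, Nat.cast_add, moveRight_apply ha]
  split_ifs <;> omega

lemma pairSum_moveRight_succ : pairSum (moveRight a i) (i + 1) = pairSum a (i + 1) + 1 := by
  zify
  simp only [pairSum, Nat.cast_add, moveRight_apply ha]
  split_ifs <;> omega

lemma tripleSum_moveRight_le (hj : j ≠ i + 1) :
    tripleSum (moveRight a i) j ≤ tripleSum a j := by
  zify
  simp only [tripleSum, Nat.cast_add, moveRight_apply ha]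
  split_ifs <;> omega

lemma tripleSum_moveRight_succ :
    tripleSum (moveRight a i) (i + 1) = tripleSum a (i + 1) + 1 := by
  zify
  simp only [tripleSum, Nat.cast_add, moveRight_apply ha]
  split_ifs <;> omega

lemma wideSum_moveRight_le (hj₁ : j ≠ i + 1) (hj₂ : j ≠ i + 2) :
    wideSum (moveRight a i) j ≤ wideSum a j := by
  simp only [wideSum_eq_tripleSum_add]
  gcongr
  · exact tripleSum_moveRight_le ha (by omega)
  · exact tripleSum_moveRight_le ha hj₁

lemma wideSum_moveRight_le_add_one (j : ℤ) : wideSum (moveRight a i) j ≤ wideSum a j + 1 := by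
  simp only [wideSum_eq_tripleSum_add]
  by_cases hj₁ : j = i + 1
  · subst hj₁
    have := tripleSum_moveRight_le ha (j := i) (by omega)
    rw [add_sub_cancel_right, tripleSum_moveRight_succ ha]
    omega
  by_cases hj₂ : j = i + 2
  · subst hj₂
    have := tripleSum_moveRight_le ha (j := i + 2) (by omega)
    rw [show i + 2 - 1 = i + 1 by ring, tripleSum_moveRight_succ ha]
    omega
  · have := tripleSum_moveRight_le ha (j := j - 1) (by omega)
    have := tripleSum_moveRight_le ha hj₁
    omega

end moveRight

end Admissible

open Admissible in
theorem stmt_2_general (k l : ℕ) (a : ℤ → ℕ)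
    (hadm : ∀ j : ℤ, a j + a (j+1) + a (j+2) ≤ k)
    (hS : ∀ j : ℤ, a j + a (j+1) ≤ l)
    (hL : ∀ j : ℤ, a (j-1) + 2 * a j + 2 * a (j+1) + a (j+2) ≤ k + l)
    (i : ℤ)
    (hi : a i + a (i+1) = l ∨ a (i-1) + 2 * a i + 2 * a (i+1) + a (i+2) = k + l)
    (hmax : ∀ j : ℤ, i < j →
      ¬(a j + a (j+1) = l ∨ a (j-1) + 2 * a j + 2 * a (j+1) + a (j+2) = k + l)) :
    0 < a i ∧
    (∀ j : ℤ,
      let b : ℤ → ℕ :=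
        Function.update (Function.update a i (a i - 1)) (i+1) (a (i+1) + 1)
      b j + b (j+1) + b (j+2) ≤ k ∧ b j + b (j+1) ≤ l ∧
        b (j-1) + 2 * b j + 2 * b (j+1) + b (j+2) ≤ k + l) := by
  have hP : pairSum a (i + 1) < l :=
    lt_of_le_of_ne (hS _) fun h => hmax (i + 1) (by omega) (.inl h)
  have hW₁ : wideSum a (i + 1) < k + l :=
    lt_of_le_of_ne (hL _) fun h => hmax (i + 1) (by omega) (.inr h)
  have hW₂ : wideSum a (i + 2) < k + l :=
    lt_of_le_of_ne (hL _) fun h => hmax (i + 2) (by omega) (.inr h)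
  have ha : 0 < a i := pos_of_isTight hadm hi hP
  have hT : tripleSum a (i + 1) < k := tripleSum_succ_lt hadm hi hW₁
  refine ⟨ha, fun j => ?_⟩
  show tripleSum (moveRight a i) j ≤ k ∧ pairSum (moveRight a i) j ≤ l ∧
    wideSum (moveRight a i) j ≤ k + l
  rcases eq_or_ne j (i + 1) with rfl | hj₁
  · rw [tripleSum_moveRight_succ ha, pairSum_moveRight_succ ha]
    exact ⟨hT, hP, (wideSum_moveRight_le_add_one ha _).trans hW₁⟩
  refine ⟨(tripleSum_moveRight_le ha hj₁).trans (hadm j),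
    (pairSum_moveRight_le ha hj₁).trans (hS j), ?_⟩
  rcases eq_or_ne j (i + 2) with rfl | hj₂
  · exact (wideSum_moveRight_le_add_one ha _).trans hW₂
  · exact (wideSum_moveRight_le ha hj₁ hj₂).trans (hL j)

/-- The right move is well defined: if i is the highest position of a weight-l particle
in a finite (k,3)-admissible configuration of maximal weight ≤ l, then a_i > 0 and the
configuration obtained by replacing (a_i, a_{i+1}) by (a_i - 1, a_{i+1} + 1) is again
(k,3)-admissible of maximal weight ≤ l. -/
theorem stmt_2 (k l : ℕ) (hl : 1 ≤ l) (hlk : l ≤ k) (a : ℤ → ℕ)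
    (hfin : {j : ℤ | a j ≠ 0}.Finite)
    (hadm : ∀ j : ℤ, a j + a (j+1) + a (j+2) ≤ k)
    (hS : ∀ j : ℤ, a j + a (j+1) ≤ l)
    (hL : ∀ j : ℤ, a (j-1) + 2 * a j + 2 * a (j+1) + a (j+2) ≤ k + l)
    (i : ℤ)
    (hi : a i + a (i+1) = l ∨ a (i-1) + 2 * a i + 2 * a (i+1) + a (i+2) = k + l)
    (hmax : ∀ j : ℤ, i < j →
      ¬(a j + a (j+1) = l ∨ a (j-1) + 2 * a j + 2 * a (j+1) + a (j+2) = k + l)) :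
    0 < a i ∧
    (∀ j : ℤ,
      let b : ℤ → ℕ :=
        Function.update (Function.update a i (a i - 1)) (i+1) (a (i+1) + 1)
      b j + b (j+1) + b (j+2) ≤ k ∧ b j + b (j+1) ≤ l ∧
        b (j-1) + 2 * b j + 2 * b (j+1) + b (j+2) ≤ k + l) :=
  stmt_2_general k l a hadm hS hL i hi hmax
end

section
/- Let a be a finite (k,3)-admissible configuration of maximal weight ≤ l such that a_i+a_{i+1} = l, a_{i'}+a_{i'+1} = l for indices i ≥ i'+2, and a_j = 0 for j ∉ {i, i+1, i', i'+1}. Set d = i·a_i + (i+1)·a_{i+1} and d' = i'·a_{i'} + (i'+1)·a_{i'+1}. Then d - d' ≥ 2l + max(2l-k, 0). -/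
/-!
Since `a i = l - a (i+1)` and `a i' = l - a (i'+1)`, the energy difference is
`(i - i') * l + (a (i+1) - a (i'+1))`. For a gap `i - i' ≥ 4` the first term is already
`≥ 4l ≥ 2l + max (2l - k) 0`, as `a (i'+1) ≤ l ≤ k`. For gaps 2 and 3 the missing amount
comes from the four-site constraint centred between the two pairs, together with the
two-site bound.
-/

section AdmissibleConfiguration

variable {k l : ℕ} {a : ℤ → ℕ} {i i' : ℤ}

theorem pair_energy_sub_eq (h1 : a i + a (i+1) = l) (h2 : a i' + a (i'+1) = l) :
    (i * a i + (i+1) * a (i+1) : ℤ) - (i' * a i' + (i'+1) * a (i'+1))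
      = (i - i') * l + ((a (i+1) : ℤ) - a (i'+1)) := by
  have e1 : (a i : ℤ) = l - a (i+1) := by omega
  have e2 : (a i' : ℤ) = l - a (i'+1) := by omega
  rw [e1, e2]
  ring

theorem interaction_le_of_gap_eq_two
    (hS : ∀ j : ℤ, a j + a (j+1) ≤ l)
    (hL : ∀ j : ℤ, a (j-1) + 2 * a j + 2 * a (j+1) + a (j+2) ≤ k + l)
    (h1 : a i + a (i+1) = l) (h2 : a i' + a (i'+1) = l) (hgap : i = i' + 2) :
    2 * l + max (2 * (l : ℤ) - k) 0 ≤ (i - i') * l + ((a (i+1) : ℤ) - a (i'+1)) := by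
  subst hgap
  have hS' := hS (i'+1)
  have hL' := hL (i'+1)
  simp only [add_sub_cancel_right, add_assoc, Int.reduceAdd] at hS' hL' h1 ⊢
  have hmax : max (2 * (l : ℤ) - k) 0 ≤ (a (i'+3) : ℤ) - a (i'+1) := max_le (by omega) (by omega)
  linarith

theorem interaction_le_of_gap_eq_three
    (hS : ∀ j : ℤ, a j + a (j+1) ≤ l)
    (hL : ∀ j : ℤ, a (j-1) + 2 * a j + 2 * a (j+1) + a (j+2) ≤ k + l)
    (h1 : a i + a (i+1) = l) (h2 : a i' + a (i'+1) = l) (hgap : i = i' + 3) :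
    2 * l + max (2 * (l : ℤ) - k) 0 ≤ (i - i') * l + ((a (i+1) : ℤ) - a (i'+1)) := by
  subst hgap
  have hS' := hS i'
  have hL' := hL (i'+2)
  simp only [add_sub_assoc, add_assoc, Int.reduceAdd, Int.reduceSub] at hL' h1 ⊢
  have hmax : max (2 * (l : ℤ) - k) 0 ≤ l + ((a (i'+4) : ℤ) - a (i'+1)) :=
    max_le (by omega) (by omega)
  linarith

theorem interaction_le_of_four_le_gap (hlk : l ≤ k) (hS : ∀ j : ℤ, a j + a (j+1) ≤ l)
    (hgap : i' + 4 ≤ i) :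
    2 * l + max (2 * (l : ℤ) - k) 0 ≤ (i - i') * l + ((a (i+1) : ℤ) - a (i'+1)) := by
  have hS' := hS i'
  have hmul : 4 * (l : ℤ) ≤ (i - i') * l := by gcongr; omega
  have hmax : max (2 * (l : ℤ) - k) 0 ≤ l := max_le (by omega) (by positivity)
  omega

end AdmissibleConfiguration

theorem stmt_4_general (k l : ℕ) (hlk : l ≤ k) (a : ℤ → ℕ)
    (hS : ∀ j : ℤ, a j + a (j+1) ≤ l)
    (hL : ∀ j : ℤ, a (j-1) + 2 * a j + 2 * a (j+1) + a (j+2) ≤ k + l)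
    (i i' : ℤ) (hii' : i' + 2 ≤ i)
    (h1 : a i + a (i+1) = l) (h2 : a i' + a (i'+1) = l) :
    (i * a i + (i+1) * a (i+1) : ℤ) - (i' * a i' + (i'+1) * a (i'+1)) ≥
      2 * l + max (2 * (l : ℤ) - k) 0 := by
  rw [pair_energy_sub_eq h1 h2, ge_iff_le]
  rcases (by omega : i = i' + 2 ∨ i = i' + 3 ∨ i' + 4 ≤ i) with hgap | hgap | hgap
  · exact interaction_le_of_gap_eq_two hS hL h1 h2 hgap
  · exact interaction_le_of_gap_eq_three hS hL h1 h2 hgap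
  · exact interaction_le_of_four_le_gap hlk hS hgap

/-- Two free weight-l particles in a (k,3)-admissible configuration of maximal weight ≤ l
have energies differing by at least A_{l,l} = 2l + max(2l-k,0). -/
theorem stmt_4 (k l : ℕ) (hl : 1 ≤ l) (hlk : l ≤ k) (a : ℤ → ℕ)
    (hadm : ∀ j : ℤ, a j + a (j+1) + a (j+2) ≤ k)
    (hS : ∀ j : ℤ, a j + a (j+1) ≤ l)
    (hL : ∀ j : ℤ, a (j-1) + 2 * a j + 2 * a (j+1) + a (j+2) ≤ k + l)
    (i i' : ℤ) (hii' : i' + 2 ≤ i)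
    (h1 : a i + a (i+1) = l) (h2 : a i' + a (i'+1) = l)
    (h0 : ∀ j : ℤ, j ≠ i → j ≠ i+1 → j ≠ i' → j ≠ i'+1 → a j = 0) :
    (i * a i + (i+1) * a (i+1) : ℤ) - (i' * a i' + (i'+1) * a (i'+1)) ≥
      2 * l + max (2 * (l : ℤ) - k) 0 :=
  stmt_4_general k l hlk a hS hL i i' hii' h1 h2
end

section
/- Let 1 ≤ l ≤ k and let d_1 > d_2 > ... > d_m be integers with d_i - d_{i+1} ≥ 2l + max(2l-k,0) for 1 ≤ i ≤ m-1. For each i choose integers j_i and c_i with 1 ≤ c_i ≤ l and j_i·c_i + (j_i+1)(l-c_i) = d_i. Then the 2m integers j_1, j_1+1, j_2, j_2+1, ..., j_m, j_m+1 are pairwise distinct, and the configuration a defined by a_{j_i} = c_i, a_{j_i+1} = l - c_i, and a_j = 0 otherwise is (k,3)-admissible of maximal weight ≤ l. -/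
/-! The two sites j, j + 1 carrying weights c, l - c have first moment
j c + (j + 1)(l - c) = (j + 1) l - c, so two particles differ in energy by
(j₁ - j₂) l + c₂ - c₁ with 1 ≤ cᵢ ≤ l. An energy gap of at least 2l therefore puts the
sites of distinct particles at distance at least two, and for particles two or three sites
apart the gap 2l + max(2l - k, 0) becomes an inequality between their weights. Every
constraint of admissibility involves a window of at most four consecutive sites, and a case
analysis on how particles occupy the window reduces each constraint to those inequalities. -/

theorem le_sub_of_forall_le_sub_succ {m : ℕ} {d : Fin m → ℤ} {g : ℤ} (hg : 0 ≤ g)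
    (h : ∀ i i' : Fin m, (i : ℕ) + 1 = i' → d i - d i' ≥ g) {p q : Fin m} (hpq : p < q) :
    g ≤ d p - d q := by
  obtain ⟨q, hq⟩ := q
  induction q with
  | zero => exact absurd (Fin.lt_def.mp hpq) (Nat.not_lt_zero _)
  | succ n ih =>
    have hstep := h ⟨n, by omega⟩ ⟨n + 1, hq⟩ rfl
    rcases Nat.lt_or_eq_of_le (Nat.le_of_lt_succ (Fin.lt_def.mp hpq)) with hlt | heq
    · linarith [ih (by omega) hlt]
    · rwa [show p = ⟨n, by omega⟩ from Fin.ext heq]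

def energy (l : ℕ) (j : ℤ) (c : ℕ) : ℤ := j * c + (j + 1) * ((l : ℤ) - c)

def minGap (k l : ℕ) : ℤ := 2 * l + max (2 * (l : ℤ) - k) 0

theorem energy_sub_energy (l : ℕ) (j₁ j₂ : ℤ) (c₁ c₂ : ℕ) :
    energy l j₁ c₁ - energy l j₂ c₂ = (j₁ - j₂) * l + c₂ - c₁ := by
  unfold energy; ring

theorem add_two_le_of_two_mul_le_energy_sub {l : ℕ} {j₁ j₂ : ℤ} {c₁ c₂ : ℕ}
    (hc₁ : 1 ≤ c₁) (hc₂ : c₂ ≤ l) (h : 2 * l ≤ energy l j₁ c₁ - energy l j₂ c₂) :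
    j₂ + 2 ≤ j₁ := by
  rw [energy_sub_energy] at h
  by_contra! hj
  have : (j₁ - j₂) * l ≤ 1 * l := by gcongr; omega
  omega

theorem le_of_minGap_le_energy_sub_of_eq_add_two {k l : ℕ} {j₁ j₂ : ℤ} {c₁ c₂ : ℕ}
    (hj : j₁ = j₂ + 2) (h : minGap k l ≤ energy l j₁ c₁ - energy l j₂ c₂) :
    c₁ ≤ c₂ ∧ c₁ + 2 * l ≤ c₂ + k := by
  rw [energy_sub_energy, hj, minGap] at h
  have := le_max_left (2 * (l : ℤ) - k) 0
  have := le_max_right (2 * (l : ℤ) - k) 0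
  constructor <;> linarith

theorem add_le_of_minGap_le_energy_sub_of_eq_add_three {k l : ℕ} {j₁ j₂ : ℤ} {c₁ c₂ : ℕ}
    (hj : j₁ = j₂ + 3) (h : minGap k l ≤ energy l j₁ c₁ - energy l j₂ c₂) :
    c₁ + l ≤ c₂ + k := by
  rw [energy_sub_energy, hj, minGap] at h
  have := le_max_left (2 * (l : ℤ) - k) 0
  linarith

structure SpacedParticles {ι : Type*} (k l : ℕ) (j : ι → ℤ) (c : ι → ℕ) : Prop where
  c_le : ∀ i, c i ≤ l
  ne_add_one : ∀ i i', j i ≠ j i' + 1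
  le_of_eq_add_two : ∀ p q, j p = j q + 2 → c p ≤ c q ∧ c p + 2 * l ≤ c q + k
  add_le_of_eq_add_three : ∀ p q, j p = j q + 3 → c p + l ≤ c q + k

structure IsParticleConfig {ι : Type*} (l : ℕ) (j : ι → ℤ) (c : ι → ℕ) (a : ℤ → ℕ) : Prop where
  apply_left : ∀ i, a (j i) = c i
  apply_right : ∀ i, a (j i + 1) = l - c i
  apply_eq_zero : ∀ x, (∀ i, x ≠ j i ∧ x ≠ j i + 1) → a x = 0

namespace IsParticleConfig

variable {ι : Type*} {k l : ℕ} {j : ι → ℤ} {c : ι → ℕ} {a : ℤ → ℕ}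

theorem apply_of_left_eq (ha : IsParticleConfig l j c a) {i : ι} {y : ℤ} (h : j i = y) :
    a y = c i :=
  h ▸ ha.apply_left i

theorem apply_of_right_eq (ha : IsParticleConfig l j c a) {i : ι} {y : ℤ} (h : j i + 1 = y) :
    a y = l - c i :=
  h ▸ ha.apply_right i

theorem exists_of_apply_ne_zero (ha : IsParticleConfig l j c a) {y : ℤ} (hy : a y ≠ 0) :
    (∃ i, j i = y ∧ a y = c i) ∨ ∃ i, j i + 1 = y ∧ a y = l - c i := by
  by_contra! h
  exact hy <| ha.apply_eq_zero y fun i =>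
    ⟨fun e => h.1 i e.symm (ha.apply_of_left_eq e.symm),
      fun e => h.2 i e.symm (ha.apply_of_right_eq e.symm)⟩

theorem apply_le (ha : IsParticleConfig l j c a) (hc : ∀ i, c i ≤ l) (y : ℤ) : a y ≤ l := by
  by_cases hy : a y = 0
  · omega
  rcases ha.exists_of_apply_ne_zero hy with ⟨i, -, h⟩ | ⟨i, -, h⟩ <;> have := hc i <;> omega

theorem two_consecutive_le (ha : IsParticleConfig l j c a) (hP : SpacedParticles k l j c)
    (x : ℤ) : a x + a (x + 1) ≤ l := by
  have hle := ha.apply_le hP.c_le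
  by_cases hx : a x = 0
  · linarith [hle (x + 1)]
  rcases ha.exists_of_apply_ne_zero hx with ⟨p, hp, hpx⟩ | ⟨p, hp, hpx⟩
  · have := ha.apply_of_right_eq (show j p + 1 = x + 1 by omega)
    have := hP.c_le p
    omega
  by_cases hx₁ : a (x + 1) = 0
  · linarith [hle x]
  rcases ha.exists_of_apply_ne_zero hx₁ with ⟨q, hq, hqx⟩ | ⟨q, hq, -⟩
  · have := hP.le_of_eq_add_two q p (by omega)
    omega
  · exact absurd (by omega) (hP.ne_add_one q p)

theorem three_consecutive_le (ha : IsParticleConfig l j c a)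
    (hP : SpacedParticles k l j c) (hlk : l ≤ k) (x : ℤ) :
    a x + a (x + 1) + a (x + 2) ≤ k := by
  have hpair := ha.two_consecutive_le hP
  have hpair₁ := hpair (x + 1)
  rw [add_assoc x 1 1, one_add_one_eq_two] at hpair₁
  by_cases hx : a x = 0
  · omega
  by_cases hx₂ : a (x + 2) = 0
  · linarith [hpair x]
  rcases ha.exists_of_apply_ne_zero hx with ⟨p, hp, hpx⟩ | ⟨p, hp, hpx⟩
  all_goals rcases ha.exists_of_apply_ne_zero hx₂ with ⟨q, hq, hqx⟩ | ⟨q, hq, hqx⟩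
  · have := ha.apply_of_right_eq (show j p + 1 = x + 1 by omega)
    have := hP.le_of_eq_add_two q p (by omega)
    have := hP.c_le p
    omega
  · exact absurd (by omega) (hP.ne_add_one q p)
  · have := hP.add_le_of_eq_add_three q p (by omega)
    by_cases hx₁ : a (x + 1) = 0
    · omega
    rcases ha.exists_of_apply_ne_zero hx₁ with ⟨r, hr, -⟩ | ⟨r, hr, -⟩
    · exact absurd (by omega) (hP.ne_add_one q r)
    · exact absurd (by omega) (hP.ne_add_one r p)
  · have := ha.apply_of_left_eq (show j q = x + 1 by omega)
    have := hP.le_of_eq_add_two q p (by omega)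
    omega

theorem four_consecutive_weighted_le (ha : IsParticleConfig l j c a)
    (hP : SpacedParticles k l j c) (hlk : l ≤ k) (x : ℤ) :
    a (x - 1) + 2 * a x + 2 * a (x + 1) + a (x + 2) ≤ k + l := by
  have hpair := ha.two_consecutive_le hP
  have htriple := ha.three_consecutive_le hP hlk
  have hpair₀ := hpair (x - 1)
  have hpair₁ := hpair x
  have hpair₂ := hpair (x + 1)
  have htriple₀ := htriple (x - 1)
  have htriple₁ := htriple x
  rw [sub_add_cancel] at hpair₀ htriple₀
  rw [show x - 1 + 2 = x + 1 by ring] at htriple₀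
  rw [add_assoc x 1 1, one_add_one_eq_two] at hpair₂
  -- an empty site splits the weighted sum into a pair sum plus a triple sum
  by_cases h : a (x - 1) = 0 ∨ a x = 0 ∨ a (x + 1) = 0 ∨ a (x + 2) = 0
  · omega
  push Not at h
  obtain ⟨hx₀, hx, hx₁, hx₂⟩ := h
  rcases ha.exists_of_apply_ne_zero hx₀ with ⟨p, hp, hpx⟩ | ⟨p, hp, hpx⟩
  · have := ha.apply_of_right_eq (show j p + 1 = x by omega)
    rcases ha.exists_of_apply_ne_zero hx₁ with ⟨r, hr, hrx⟩ | ⟨r, hr, -⟩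
    · have := ha.apply_of_right_eq (show j r + 1 = x + 2 by omega)
      have := hP.le_of_eq_add_two r p (by omega)
      have := hP.c_le p
      have := hP.c_le r
      omega
    · exact absurd (by omega) (hP.ne_add_one r p)
  rcases ha.exists_of_apply_ne_zero hx with ⟨r, hr, hrx⟩ | ⟨r, hr, -⟩
  · have := ha.apply_of_right_eq (show j r + 1 = x + 1 by omega)
    rcases ha.exists_of_apply_ne_zero hx₂ with ⟨q, hq, hqx⟩ | ⟨q, hq, -⟩
    · have := hP.le_of_eq_add_two r p (by omega)
      have := hP.le_of_eq_add_two q r (by omega)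
      have := hP.c_le p
      have := hP.c_le r
      omega
    · exact absurd (by omega) (hP.ne_add_one q r)
  · exact absurd (by omega) (hP.ne_add_one r p)

end IsParticleConfig

theorem stmt_5_general (k l : ℕ) (hlk : l ≤ k) (m : ℕ)
    (d : Fin m → ℤ)
    (hgap : ∀ i j : Fin m, (i : ℕ) + 1 = (j : ℕ) →
      d i - d j ≥ 2 * l + max (2 * (l : ℤ) - k) 0)
    (j : Fin m → ℤ) (c : Fin m → ℕ)
    (hc : ∀ i, 1 ≤ c i ∧ c i ≤ l)
    (hd : ∀ i, j i * c i + (j i + 1) * ((l : ℤ) - c i) = d i)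
    (a : ℤ → ℕ)
    (ha1 : ∀ i, a (j i) = c i ∧ a (j i + 1) = l - c i)
    (ha0 : ∀ x : ℤ, (∀ i, x ≠ j i ∧ x ≠ j i + 1) → a x = 0) :
    (∀ i i' : Fin m, i ≠ i' → j i ≠ j i' ∧ j i ≠ j i' + 1 ∧ j i + 1 ≠ j i') ∧
    (∀ x : ℤ, a x + a (x+1) + a (x+2) ≤ k ∧ a x + a (x+1) ≤ l ∧
      a (x-1) + 2 * a x + 2 * a (x+1) + a (x+2) ≤ k + l) := by
  have hE : ∀ i, energy l (j i) (c i) = d i := hd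
  have hfar : ∀ p q : Fin m, p < q → minGap k l ≤ energy l (j p) (c p) - energy l (j q) (c q) :=
    fun p q hpq => by
      rw [hE, hE]
      exact le_sub_of_forall_le_sub_succ (by positivity) hgap hpq
  have hsep : ∀ p q : Fin m, p < q → j q + 2 ≤ j p := fun p q hpq =>
    add_two_le_of_two_mul_le_energy_sub (hc p).1 (hc q).2
      (le_trans (by unfold minGap; simp) (hfar p q hpq))
  have hanti : StrictAnti j := fun p q hpq => by linarith [hsep p q hpq]
  have hP : SpacedParticles k l j c :=
    { c_le := fun i => (hc i).2
      ne_add_one := fun p q hpq => by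
        rcases lt_trichotomy p q with h | rfl | h
        · linarith [hsep p q h]
        · omega
        · linarith [hsep q p h]
      le_of_eq_add_two := fun p q hpq =>
        le_of_minGap_le_energy_sub_of_eq_add_two hpq
          (hfar p q (hanti.lt_iff_gt.mp (by omega)))
      add_le_of_eq_add_three := fun p q hpq =>
        add_le_of_minGap_le_energy_sub_of_eq_add_three hpq
          (hfar p q (hanti.lt_iff_gt.mp (by omega))) }
  have ha : IsParticleConfig l j c a := ⟨fun i => (ha1 i).1, fun i => (ha1 i).2, ha0⟩
  refine ⟨fun i i' hne => ⟨hanti.injective.ne hne, hP.ne_add_one i i', (hP.ne_add_one i' i).symm⟩,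
    fun x => ⟨ha.three_consecutive_le hP hlk x,
    ha.two_consecutive_le hP x, ha.four_consecutive_weighted_le hP hlk x⟩⟩

/-- Free weight-l particles at energies d_1 > ... > d_m with gaps at least
A_{l,l} = 2l + max(2l-k,0) occupy pairwise distinct columns and form a
(k,3)-admissible configuration of maximal weight ≤ l. -/
theorem stmt_5 (k l : ℕ) (hl : 1 ≤ l) (hlk : l ≤ k) (m : ℕ)
    (d : Fin m → ℤ)
    (hgap : ∀ i j : Fin m, (i : ℕ) + 1 = (j : ℕ) →
      d i - d j ≥ 2 * l + max (2 * (l : ℤ) - k) 0)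
    (j : Fin m → ℤ) (c : Fin m → ℕ)
    (hc : ∀ i, 1 ≤ c i ∧ c i ≤ l)
    (hd : ∀ i, j i * c i + (j i + 1) * ((l : ℤ) - c i) = d i)
    (a : ℤ → ℕ)
    (ha1 : ∀ i, a (j i) = c i ∧ a (j i + 1) = l - c i)
    (ha0 : ∀ x : ℤ, (∀ i, x ≠ j i ∧ x ≠ j i + 1) → a x = 0) :
    (∀ i i' : Fin m, i ≠ i' → j i ≠ j i' ∧ j i ≠ j i' + 1 ∧ j i + 1 ≠ j i') ∧
    (∀ x : ℤ, a x + a (x+1) + a (x+2) ≤ k ∧ a x + a (x+1) ≤ l ∧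
      a (x-1) + 2 * a x + 2 * a (x+1) + a (x+2) ≤ k + l) :=
  stmt_5_general k l hlk m d hgap j c hc hd a ha1 ha0
end
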